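/- Let p be a prime, l ≥ 2, m = p^l, and j_1, ..., j_m ≥ 1 integers with v_p(j_1! ⋯ j_m!) = v_p(⌊(j_1+...+j_m)/p^l⌋) (and this common value finite). Then j_i ≤ p-1 for all i = 1, ..., m. -/

import Mathlib

/-!
Write `V = v_p(∏ jᵢ!)` and `S = ∑ jᵢ`. If some `jₖ ≥ p` then `V ≥ 1`, and since `S ≥ p^l`
the quotient `⌊S / p^l⌋` is a nonzero multiple of `p^V`, so `S ≥ p^(V + l)`. On the other hand
`v_p(j!) ≥ ⌊j / p⌋` gives `j ≤ p · v_p(j!) + (p - 1)`, and summing, `S ≤ p V + p^l (p - 1)`.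
For `l ≥ 2` and `V ≥ 1` these two bounds are incompatible.
-/

open Finset Nat

theorem padicValNat_finset_prod {ι : Type*} {p : ℕ} [Fact p.Prime] (s : Finset ι) {f : ι → ℕ}
    (hf : ∀ i ∈ s, f i ≠ 0) : padicValNat p (∏ i ∈ s, f i) = ∑ i ∈ s, padicValNat p (f i) := by
  classical
  induction s using Finset.induction_on with
  | empty => simp
  | insert a s ha ih =>
    rw [prod_insert ha, sum_insert ha, padicValNat.mul (hf a (mem_insert_self a s))
      (prod_ne_zero_iff.2 fun i hi => hf i (mem_insert_of_mem hi)),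
      ih fun i hi => hf i (mem_insert_of_mem hi)]

theorem div_le_padicValNat_factorial (p : ℕ) [Fact p.Prime] (n : ℕ) :
    n / p ≤ padicValNat p n ! := by
  rw [← padicValNat_mul_div_factorial, padicValNat_factorial_mul]
  omega

theorem le_mul_padicValNat_factorial_add (p : ℕ) [Fact p.Prime] (n : ℕ) :
    n ≤ p * padicValNat p n ! + (p - 1) := by
  have hmod : n % p ≤ p - 1 := Nat.le_sub_one_of_lt (Nat.mod_lt n (Fact.out : p.Prime).pos)
  have hdiv := Nat.mul_le_mul_left p (div_le_padicValNat_factorial p n)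
  have := Nat.div_add_mod n p
  omega

theorem sum_le_mul_padicValNat_prod_factorial_add {ι : Type*} (p : ℕ) [Fact p.Prime]
    (s : Finset ι) (f : ι → ℕ) :
    ∑ i ∈ s, f i ≤ p * padicValNat p (∏ i ∈ s, (f i)!) + #s * (p - 1) := by
  rw [padicValNat_finset_prod s fun i _ => factorial_ne_zero _, mul_sum, ← smul_eq_mul,
    ← sum_const, ← sum_add_distrib]
  exact sum_le_sum fun i _ => le_mul_padicValNat_factorial_add p (f i)

theorem mul_add_pow_mul_sub_one_lt_pow_mul_pow {p l V : ℕ} (hp : 2 ≤ p) (hl : 2 ≤ l)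
    (hV : 1 ≤ V) : p * V + p ^ l * (p - 1) < p ^ V * p ^ l := by
  have hVp : V < p ^ V := Nat.lt_pow_self (by omega)
  have hpV : p ≤ p ^ V := Nat.le_self_pow (by omega) p
  have hpl : p ^ 2 ≤ p ^ l := Nat.pow_le_pow_right (by omega) hl
  zify [show 1 ≤ p by omega] at *
  -- `p^l (p^V - p + 1) ≥ p² (p^V - p + 1) ≥ p · p^V > p V`
  nlinarith [mul_nonneg (sub_nonneg.2 hpl) (by linarith : (0 : ℤ) ≤ p ^ V - p + 1),
    mul_nonneg (mul_nonneg (by linarith) (by linarith) : (0 : ℤ) ≤ p * (p - 1))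
      (sub_nonneg.2 hpV)]

theorem stmt_5 (p l : ℕ) (hp : p.Prime) (hl : 2 ≤ l)
    (j : Fin (p ^ l) → ℕ) (hj : ∀ i, 1 ≤ j i)
    (heq : padicValNat p (∏ i, Nat.factorial (j i)) = padicValNat p ((∑ i, j i) / p ^ l)) :
    ∀ i, j i ≤ p - 1 := by
  have := Fact.mk hp
  by_contra! ⟨k, hk⟩
  set V := padicValNat p (∏ i, (j i)!)
  have hV : 1 ≤ V := one_le_padicValNat_of_dvd (prod_ne_zero_iff.2 fun i _ => factorial_ne_zero _)
    ((dvd_factorial hp.pos (by omega)).trans (dvd_prod_of_mem _ (mem_univ k)))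
  have hsum_ge : p ^ l ≤ ∑ i, j i := by
    simpa using card_nsmul_le_sum univ j 1 fun i _ => hj i
  have hquot : p ^ V ≤ (∑ i, j i) / p ^ l :=
    Nat.le_of_dvd (Nat.div_pos hsum_ge (pow_pos hp.pos l)) (heq ▸ pow_padicValNat_dvd)
  have hsum_le : ∑ i, j i ≤ p * V + p ^ l * (p - 1) := by
    simpa using sum_le_mul_padicValNat_prod_factorial_add p univ j
  exact (mul_add_pow_mul_sub_one_lt_pow_mul_pow hp.two_le hl hV).not_ge
    (((Nat.le_div_iff_mul_le (pow_pos hp.pos l)).1 hquot).trans hsum_le)
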